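/- arXiv:2406.16666 — 3 statements merged into one kernel-verified Lean document; each statement's English description precedes it below -/
import Mathlib

section
/- For any symmetric matrix A ∈ ℝ^{n×n} and a uniformly random subset S of [n] of size τ, E_S ‖A − A_[S]‖₂ ≤ sqrt(1 − p₂) ‖A‖_F, where p₂ = τ(τ−1)/(n(n−1)) and ‖·‖₂ is the spectral norm. -/
/-- Zero out the entries of the matrix `A` whose row or column index is outside `S`. -/
noncomputable def restrictM {n : ℕ} (S : Finset (Fin n)) (A : Matrix (Fin n) (Fin n) ℝ) :
    Matrix (Fin n) (Fin n) ℝ := fun i j => if i ∈ S ∧ j ∈ S then A i j else 0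

/-- The Frobenius norm of a matrix. -/
noncomputable def frobNorm {n : ℕ} (A : Matrix (Fin n) (Fin n) ℝ) : ℝ :=
  Real.sqrt (∑ i, ∑ j, (A i j) ^ 2)

/-- The spectral norm of a matrix (operator norm on Euclidean space). -/
noncomputable def specNorm {n : ℕ} (A : Matrix (Fin n) (Fin n) ℝ) : ℝ :=
  ‖Matrix.toEuclideanCLM (𝕜 := ℝ) A‖

/-!
Since `‖·‖₂ ≤ ‖·‖_F`, it suffices to bound `E_S ‖A − A_[S]‖_F`. The matrix `A − A_[S]` keeps
exactly the entries `(i, j)` with `i ∉ S` or `j ∉ S`. A pair `i ≠ j` lies in `S` with probability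
`C(τ, 2) / C(n, 2) = p₂`, and a diagonal index with probability `τ / n ≥ p₂`, hence
`E_S ‖A − A_[S]‖_F² ≤ (1 − p₂) ‖A‖_F²`; Jensen's inequality for the square root (here
Cauchy–Schwarz over the subsets) finishes the proof.
-/

open Finset

lemma frobNorm_nonneg {n : ℕ} (A : Matrix (Fin n) (Fin n) ℝ) : 0 ≤ frobNorm A :=
  Real.sqrt_nonneg _

lemma frobNorm_sq {n : ℕ} (A : Matrix (Fin n) (Fin n) ℝ) :
    frobNorm A ^ 2 = ∑ i, ∑ j, A i j ^ 2 :=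
  Real.sq_sqrt (by positivity)

lemma specNorm_le_frobNorm {n : ℕ} (A : Matrix (Fin n) (Fin n) ℝ) :
    specNorm A ≤ frobNorm A := by
  refine ContinuousLinearMap.opNorm_le_bound _ (frobNorm_nonneg A) fun x => ?_
  refine le_of_pow_le_pow_left₀ two_ne_zero (mul_nonneg (frobNorm_nonneg A) (norm_nonneg x)) ?_
  rw [mul_pow, frobNorm_sq, EuclideanSpace.real_norm_sq_eq, EuclideanSpace.real_norm_sq_eq,
    sum_mul]
  refine sum_le_sum fun k _ => ?_
  simpa [Matrix.mulVec, dotProduct] using sum_mul_sq_le_sq_mul_sq univ (A k) x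

lemma card_filter_mem_mem_powersetCard_mul {α : Type*} [DecidableEq α] {s : Finset α} {i j : α}
    (hi : i ∈ s) (hj : j ∈ s) (hij : i ≠ j) (k : ℕ) :
    #{S ∈ s.powersetCard k | i ∈ S ∧ j ∈ S} * (#s).choose 2 = (#s).choose k * k.choose 2 := by
  have hpair : ∀ S : Finset α, i ∈ S ∧ j ∈ S ↔ {i, j} ⊆ S := by
    simp [insert_subset_iff]
  simp_rw [hpair]
  have hsub : {i, j} ⊆ s := by simp [insert_subset_iff, hi, hj]
  have hcard : #({i, j} : Finset α) = 2 := card_pair hij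
  rcases lt_or_ge k 2 with hk | hk
  · have hempty : {S ∈ s.powersetCard k | {i, j} ⊆ S} = ∅ := by
      refine filter_false_of_mem fun S hS hsub => ?_
      have := card_le_card hsub
      rw [(mem_powersetCard.mp hS).2, hcard] at this
      omega
    simp [hempty, Nat.choose_eq_zero_of_lt hk]
  rw [card_filter_powersetCard_subset _ _ _ hsub (hcard ▸ hk), hcard, Nat.choose_mul hk, mul_comm]

lemma mul_card_powersetCard_le_card_filter_mem_mem {α : Type*} [Fintype α] [DecidableEq α]
    (k : ℕ) (i j : α) :
    (k * (k - 1) / (Fintype.card α * (Fintype.card α - 1)) : ℝ) *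
        #(powersetCard k (univ : Finset α)) ≤
      #{S ∈ powersetCard k (univ : Finset α) | i ∈ S ∧ j ∈ S} := by
  have hdistinct : ∀ j', j' ≠ i →
      (k * (k - 1) / (Fintype.card α * (Fintype.card α - 1)) : ℝ) *
          #(powersetCard k (univ : Finset α)) =
        #{S ∈ powersetCard k (univ : Finset α) | i ∈ S ∧ j' ∈ S} := by
    intro j' hj'
    have hcount := congrArg (Nat.cast (R := ℝ))
      (card_filter_mem_mem_powersetCard_mul (mem_univ i) (mem_univ j') hj'.symm k)
    have hm : (2 : ℝ) ≤ Fintype.card α := by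
      exact_mod_cast Fintype.one_lt_card_iff.mpr ⟨i, j', hj'.symm⟩
    push_cast [Nat.cast_choose_two, card_univ] at hcount
    rw [card_powersetCard, card_univ, div_mul_eq_mul_div, div_eq_iff (by nlinarith)]
    linarith
  by_cases hji : j = i
  · subst hji
    by_cases hnontriv : ∃ j', j' ≠ j
    · obtain ⟨j', hj'⟩ := hnontriv
      rw [hdistinct j' hj']
      norm_cast
      exact card_le_card (monotone_filter_right _ fun S _ h => ⟨h.1, h.1⟩)
    · -- the denominator `card α * (card α - 1)` vanishes, so the left side is `0`
      have hm : Fintype.card α ≤ 1 := Fintype.card_le_one_iff.mpr fun a b => by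
        push Not at hnontriv; rw [hnontriv a, hnontriv b]
      interval_cases Fintype.card α <;> simp
  · exact (hdistinct j hji).le

lemma sub_restrictM_apply_sq {n : ℕ} (S : Finset (Fin n)) (A : Matrix (Fin n) (Fin n) ℝ)
    (i j : Fin n) :
    (A - restrictM S A) i j ^ 2 = A i j ^ 2 - if i ∈ S ∧ j ∈ S then A i j ^ 2 else 0 := by
  by_cases h : i ∈ S ∧ j ∈ S <;> simp [restrictM, h]

lemma sum_frobNorm_sq_sub_restrictM_le {n : ℕ} (A : Matrix (Fin n) (Fin n) ℝ)
    (P : Finset (Finset (Fin n))) (q : ℝ)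
    (hq : ∀ i j, q * #P ≤ #{S ∈ P | i ∈ S ∧ j ∈ S}) :
    ∑ S ∈ P, frobNorm (A - restrictM S A) ^ 2 ≤ (1 - q) * #P * frobNorm A ^ 2 := by
  simp_rw [frobNorm_sq, mul_sum, sub_restrictM_apply_sq]
  rw [sum_comm]
  refine sum_le_sum fun i _ => ?_
  rw [sum_comm]
  refine sum_le_sum fun j _ => ?_
  rw [sum_sub_distrib, sum_const, ← sum_filter, sum_const, nsmul_eq_mul, nsmul_eq_mul]
  nlinarith [hq i j, sq_nonneg (A i j)]

theorem expectation_spec_norm_hessian_restrict_le_general {n τ : ℕ}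
    (A : Matrix (Fin n) (Fin n) ℝ) :
    (∑ S ∈ Finset.powersetCard τ (Finset.univ : Finset (Fin n)), specNorm (A - restrictM S A)) /
        ((Finset.powersetCard τ (Finset.univ : Finset (Fin n))).card : ℝ)
      ≤ Real.sqrt (1 - (τ : ℝ) * (τ - 1) / ((n : ℝ) * (n - 1))) * frobNorm A := by
  set P := powersetCard τ (univ : Finset (Fin n))
  set p : ℝ := τ * (τ - 1) / (n * (n - 1))
  have hfrob : ∑ S ∈ P, frobNorm (A - restrictM S A) ^ 2 ≤ (1 - p) * #P * frobNorm A ^ 2 :=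
    sum_frobNorm_sq_sub_restrictM_le A P p fun i j => by
      simpa only [Fintype.card_fin] using mul_card_powersetCard_le_card_filter_mem_mem τ i j
  refine div_le_of_le_mul₀ (Nat.cast_nonneg _)
    (mul_nonneg (Real.sqrt_nonneg _) (frobNorm_nonneg A)) ?_
  calc ∑ S ∈ P, specNorm (A - restrictM S A)
      ≤ ∑ S ∈ P, frobNorm (A - restrictM S A) := sum_le_sum fun S _ => specNorm_le_frobNorm _
    _ ≤ √(#P * ∑ S ∈ P, frobNorm (A - restrictM S A) ^ 2) :=
        Real.le_sqrt_of_sq_le (sq_sum_le_card_mul_sum_sq ..)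
    _ ≤ √(#P * ((1 - p) * #P * frobNorm A ^ 2)) := by gcongr
    _ = √(1 - p) * frobNorm A * #P := by
        rw [show (#P : ℝ) * ((1 - p) * #P * frobNorm A ^ 2) = (1 - p) * (#P * frobNorm A) ^ 2 by
          ring, Real.sqrt_mul' _ (sq_nonneg _),
          Real.sqrt_sq (mul_nonneg (Nat.cast_nonneg _) (frobNorm_nonneg A))]
        ring

/-- For a symmetric matrix `A` and a uniformly random subset `S ⊆ [n]` of size `τ`,
`E_S ‖A − A_[S]‖₂ ≤ sqrt(1 − p₂) ‖A‖_F` with `p₂ = τ(τ−1)/(n(n−1))`. -/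
theorem expectation_spec_norm_hessian_restrict_le {n τ : ℕ} (hn : 2 ≤ n) (hτ : τ ≤ n)
    (A : Matrix (Fin n) (Fin n) ℝ) (hA : A.IsSymm) :
    (∑ S ∈ Finset.powersetCard τ (Finset.univ : Finset (Fin n)), specNorm (A - restrictM S A)) /
        ((Finset.powersetCard τ (Finset.univ : Finset (Fin n))).card : ℝ)
      ≤ Real.sqrt (1 - (τ : ℝ) * (τ - 1) / ((n : ℝ) * (n - 1))) * frobNorm A :=
  expectation_spec_norm_hessian_restrict_le_general A
end

section
/- Let Q ∈ ℝ^{n×n} be symmetric, g ∈ ℝ^n, M > 0, and let h* be a global minimizer over ℝ^n of m(h) = ⟨g, h⟩ + (1/2)⟨Q h, h⟩ + (M/6)‖h‖³. Then Q + (M/2)‖h*‖ · I ⪰ 0. -/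
/-!
At a global minimizer `h*` the gradient `g + Q h* + (M/2)‖h*‖ h*` vanishes, and then for every
`u` on the sphere of radius `r = ‖h*‖` the cubic terms cancel and
`m(u) - m(h*) = ½⟪(Q + (M/2) r I)(u - h*), u - h*⟫`, which is therefore nonnegative.
Every direction `w` with `⟪h*, w⟫ ≠ 0` is, up to a nonzero scalar, such a chord `u - h*`:
the line `h* + α w` meets the sphere again at `α = -2⟪h*, w⟫ / ‖w‖²`. The remaining directions
are limits of these, and for `h* = 0` one lets `t → 0` in `m(t w) ≥ m(0)` instead.
-/

open scoped RealInnerProductSpace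
open Filter Topology

theorem ContinuousAt.nonneg_of_forall_ne {X : Type*} [TopologicalSpace X] {f : X → ℝ} {a : X}
    [(𝓝[≠] a).NeBot] (hf : ContinuousAt f a) (h : ∀ x ≠ a, 0 ≤ f x) : 0 ≤ f a :=
  ge_of_tendsto (hf.tendsto.mono_left nhdsWithin_le_nhds)
    (eventually_nhdsWithin_of_forall (s := {a}ᶜ) h)

section

variable {E : Type*} [NormedAddCommGroup E] [InnerProductSpace ℝ E]

theorem norm_add_smul_eq_norm (h w : E) : ‖h + (-2 * ⟪h, w⟫ / ‖w‖ ^ 2) • w‖ = ‖h‖ := by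
  rcases eq_or_ne w 0 with rfl | hw
  · simp
  have hw2 : ‖w‖ ^ 2 ≠ 0 := by positivity
  refine (sq_eq_sq₀ (norm_nonneg _) (norm_nonneg _)).mp ?_
  rw [norm_add_sq_real, inner_smul_right, norm_smul, mul_pow, Real.norm_eq_abs, sq_abs]
  field_simp
  ring

noncomputable def cubicModel (g : E) (A : E →L[ℝ] E) (M : ℝ) (h : E) : ℝ :=
  ⟪g, h⟫ + (1 / 2) * ⟪A h, h⟫ + (M / 6) * ‖h‖ ^ 3

variable {g : E} {A : E →L[ℝ] E} {M : ℝ}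

theorem hasDerivAt_cubicModel_line (hA : (A : E →ₗ[ℝ] E).IsSymmetric) (h v : E) :
    HasDerivAt (fun t : ℝ ↦ cubicModel g A M (h + t • v))
      ⟪g + A h + ((M / 2) * ‖h‖) • h, v⟫ 0 := by
  have hline : HasDerivAt (fun t : ℝ ↦ h + t • v) v 0 := by
    simpa using ((hasDerivAt_id (0 : ℝ)).smul_const v).const_add h
  have hcube : HasDerivAt (fun t : ℝ ↦ ‖h + t • v‖ ^ 3) (3 * ‖h‖ * ⟪h, v⟫) 0 := by
    have := (hasFDerivAt_norm_rpow (h + (0 : ℝ) • v) (by norm_num : (1 : ℝ) < 3)).comp_hasDerivAt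
      (0 : ℝ) hline
    norm_num [Function.comp_def] at this
    exact this
  have := (((hasDerivAt_const 0 g).inner ℝ hline).add
    (((A.hasFDerivAt.comp_hasDerivAt 0 hline).inner ℝ hline).const_mul (1 / 2))).add
    (hcube.const_mul (M / 6))
  refine (this.congr_deriv ?_).congr_of_eventuallyEq (.of_forall fun t ↦ ?_)
  · simp only [Function.comp_apply, zero_smul, add_zero, inner_zero_left, inner_add_left,
      real_inner_smul_left, hA.apply_clm v h, real_inner_comm v (A h)]
    ring
  · rfl

variable {hs : E}

theorem cubicModel_gradient_eq_zero_of_isMin (hA : (A : E →ₗ[ℝ] E).IsSymmetric)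
    (hmin : ∀ h, cubicModel g A M hs ≤ cubicModel g A M h) :
    g + A hs + ((M / 2) * ‖hs‖) • hs = 0 := by
  set G := g + A hs + ((M / 2) * ‖hs‖) • hs
  have hloc : IsLocalMin (fun t : ℝ ↦ cubicModel g A M (hs + t • G)) 0 :=
    .of_forall fun t ↦ by simpa using hmin (hs + t • G)
  exact inner_self_eq_zero.mp (hloc.hasDerivAt_eq_zero (hasDerivAt_cubicModel_line hA hs G))

theorem cubicModel_sub_cubicModel_of_norm_eq (hA : (A : E →ₗ[ℝ] E).IsSymmetric)
    (hgrad : g + A hs + ((M / 2) * ‖hs‖) • hs = 0) {u : E} (hu : ‖u‖ = ‖hs‖) :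
    cubicModel g A M u - cubicModel g A M hs =
      (1 / 2) * ⟪(A + ((M / 2) * ‖hs‖) • 1) (u - hs), u - hs⟫ := by
  obtain ⟨d, rfl⟩ : ∃ d, u = hs + d := ⟨u - hs, by abel⟩
  rw [add_sub_cancel_left]
  have hg : g = -A hs - ((M / 2) * ‖hs‖) • hs := by
    rw [← sub_eq_zero, ← hgrad]; abel
  have hd : 2 * ⟪hs, d⟫ = -‖d‖ ^ 2 := by
    have := congrArg (· ^ 2) hu
    simp only [norm_add_sq_real] at this
    linarith
  simp only [cubicModel, hu, hg, add_apply, smul_apply, one_apply_eq_self, map_add,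
    inner_add_left, inner_add_right, inner_sub_left, inner_neg_left, real_inner_smul_left,
    hA.apply_clm d hs, real_inner_self_eq_norm_sq, real_inner_comm (A hs) d]
  linear_combination (-(M / 4) * ‖hs‖) * hd

theorem inner_add_smul_one_apply_self_nonneg_of_inner_ne_zero
    (hA : (A : E →ₗ[ℝ] E).IsSymmetric) (hmin : ∀ h, cubicModel g A M hs ≤ cubicModel g A M h)
    {w : E} (hw : ⟪hs, w⟫ ≠ 0) :
    0 ≤ ⟪(A + ((M / 2) * ‖hs‖) • 1) w, w⟫ := by
  set α := -2 * ⟪hs, w⟫ / ‖w‖ ^ 2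
  have hα : α ≠ 0 := by
    have : w ≠ 0 := by rintro rfl; simp at hw
    exact div_ne_zero (mul_ne_zero (by norm_num) hw) (by positivity)
  have hsub := cubicModel_sub_cubicModel_of_norm_eq hA
    (cubicModel_gradient_eq_zero_of_isMin hA hmin) (norm_add_smul_eq_norm hs w)
  have hle : 0 ≤ α ^ 2 / 2 * ⟪(A + ((M / 2) * ‖hs‖) • 1) w, w⟫ := by
    have := sub_nonneg.mpr (hmin (hs + α • w))
    rw [hsub, add_sub_cancel_left, map_smul, real_inner_smul_left, real_inner_smul_right] at this
    linarith
  exact (mul_nonneg_iff_of_pos_left (by positivity)).mp hle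

theorem inner_apply_self_nonneg_of_isMin_zero (hA : (A : E →ₗ[ℝ] E).IsSymmetric)
    (hmin : ∀ h, cubicModel g A M 0 ≤ cubicModel g A M h) (w : E) : 0 ≤ ⟪A w, w⟫ := by
  obtain rfl : g = 0 := by simpa using cubicModel_gradient_eq_zero_of_isMin hA hmin
  have hcont : ContinuousAt (fun t : ℝ ↦ ⟪A w, w⟫ + (M / 3) * |t| * ‖w‖ ^ 3) 0 := by fun_prop
  simpa using hcont.nonneg_of_forall_ne fun t ht ↦ by
    have := hmin (t • w)
    simp only [cubicModel, inner_zero_left, inner_zero_right, map_zero, norm_zero, map_smul,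
      real_inner_smul_left, real_inner_smul_right, norm_smul, Real.norm_eq_abs, mul_pow,
      pow_succ |t| 2, sq_abs] at this
    refine (mul_nonneg_iff_of_pos_left (by positivity : 0 < t ^ 2 / 2)).mp ?_
    linarith

theorem isPositive_add_smul_one_of_isMin (hA : (A : E →ₗ[ℝ] E).IsSymmetric)
    (hmin : ∀ h, cubicModel g A M hs ≤ cubicModel g A M h) :
    (A + ((M / 2) * ‖hs‖) • 1).IsPositive := by
  refine ⟨hA.add (LinearMap.IsSymmetric.one.smul (conj_trivial _)), fun w ↦ ?_⟩
  rw [ContinuousLinearMap.reApplyInnerSelf_apply, RCLike.re_to_real]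
  rcases eq_or_ne hs 0 with rfl | hs0
  · simpa using inner_apply_self_nonneg_of_isMin_zero hA hmin w
  obtain hw | hw := ne_or_eq ⟪hs, w⟫ 0
  · exact inner_add_smul_one_apply_self_nonneg_of_inner_ne_zero hA hmin hw
  have hcont : ContinuousAt (fun ε : ℝ ↦
      ⟪(A + ((M / 2) * ‖hs‖) • 1) (w + ε • hs), w + ε • hs⟫) 0 := by fun_prop
  simpa using hcont.nonneg_of_forall_ne fun ε hε ↦
    inner_add_smul_one_apply_self_nonneg_of_inner_ne_zero hA hmin (by
      rw [inner_add_right, hw, zero_add, real_inner_smul_right, real_inner_self_eq_norm_sq]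
      exact mul_ne_zero hε (by positivity))

end

theorem cubic_model_global_min_psd_general {n : ℕ} (Q : Matrix (Fin n) (Fin n) ℝ) (hQ : Q.IsSymm)
    (g hs : EuclideanSpace ℝ (Fin n)) (M : ℝ)
    (hmin : ∀ h : EuclideanSpace ℝ (Fin n),
      ⟪g, hs⟫ + (1 / 2) * ⟪(Matrix.toEuclideanCLM (𝕜 := ℝ) Q) hs, hs⟫ + (M / 6) * ‖hs‖ ^ 3
        ≤ ⟪g, h⟫ + (1 / 2) * ⟪(Matrix.toEuclideanCLM (𝕜 := ℝ) Q) h, h⟫ + (M / 6) * ‖h‖ ^ 3) :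
    (Q + ((M / 2) * ‖hs‖) • (1 : Matrix (Fin n) (Fin n) ℝ)).PosSemidef := by
  have hpos := isPositive_add_smul_one_of_isMin (A := Matrix.toEuclideanCLM (𝕜 := ℝ) Q) (by
    rw [Matrix.coe_toEuclideanCLM_eq_toEuclideanLin, Matrix.isSymmetric_toEuclideanLin_iff]
    exact hQ) hmin
  rw [← map_one (Matrix.toEuclideanCLM (n := Fin n) (𝕜 := ℝ)), ← map_smul, ← map_add,
    ← ContinuousLinearMap.isPositive_toLinearMap_iff,
    Matrix.coe_toEuclideanCLM_eq_toEuclideanLin] at hpos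
  exact Matrix.isPositive_toEuclideanLin_iff.mp hpos

/-- If `h*` is a global minimizer of the cubic model
`m(h) = ⟨g,h⟩ + ½⟨Qh,h⟩ + (M/6)‖h‖³`, then `Q + (M/2)‖h*‖ I ⪰ 0`. -/
theorem cubic_model_global_min_psd {n : ℕ} (Q : Matrix (Fin n) (Fin n) ℝ) (hQ : Q.IsSymm)
    (g hs : EuclideanSpace ℝ (Fin n)) (M : ℝ) (hM : 0 < M)
    (hmin : ∀ h : EuclideanSpace ℝ (Fin n),
      ⟪g, hs⟫ + (1 / 2) * ⟪(Matrix.toEuclideanCLM (𝕜 := ℝ) Q) hs, hs⟫ + (M / 6) * ‖hs‖ ^ 3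
        ≤ ⟪g, h⟫ + (1 / 2) * ⟪(Matrix.toEuclideanCLM (𝕜 := ℝ) Q) h, h⟫ + (M / 6) * ‖h‖ ^ 3) :
    (Q + ((M / 2) * ‖hs‖) • (1 : Matrix (Fin n) (Fin n) ℝ)).PosSemidef :=
  cubic_model_global_min_psd_general Q hQ g hs M hmin
end

section
/- Let Q ∈ ℝ^{n×n} be symmetric, g ∈ ℝ^n, M > 0, and let h* be a global minimizer of m(h) = ⟨g, h⟩ + (1/2)⟨Q h, h⟩ + (M/6)‖h‖³ over ℝ^n. Then ⟨g, h*⟩ ≤ 0. -/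
open scoped RealInnerProductSpace

theorem inner_nonpos_of_forall_inner_add_le_of_even {E : Type*} [NormedAddCommGroup E]
    [InnerProductSpace ℝ E] {g x : E} {φ : E → ℝ} (hφ : ∀ h, φ (-h) = φ h)
    (hmin : ∀ h, ⟪g, x⟫ + φ x ≤ ⟪g, h⟫ + φ h) : ⟪g, x⟫ ≤ 0 := by
  have hneg := hmin (-x)
  rw [hφ, inner_neg_right] at hneg
  linarith

theorem cubic_model_global_min_inner_nonpos_general {n : ℕ} (Q : Matrix (Fin n) (Fin n) ℝ)
    (g hs : EuclideanSpace ℝ (Fin n)) (M : ℝ)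
    (hmin : ∀ h : EuclideanSpace ℝ (Fin n),
      ⟪g, hs⟫ + (1 / 2) * ⟪(Matrix.toEuclideanCLM (𝕜 := ℝ) Q) hs, hs⟫ + (M / 6) * ‖hs‖ ^ 3
        ≤ ⟪g, h⟫ + (1 / 2) * ⟪(Matrix.toEuclideanCLM (𝕜 := ℝ) Q) h, h⟫ + (M / 6) * ‖h‖ ^ 3) :
    ⟪g, hs⟫ ≤ 0 := by
  refine inner_nonpos_of_forall_inner_add_le_of_even
    (φ := fun h ↦ (1 / 2) * ⟪Matrix.toEuclideanCLM (𝕜 := ℝ) Q h, h⟫ + (M / 6) * ‖h‖ ^ 3)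
    (fun h ↦ by simp only [map_neg, inner_neg_neg, norm_neg]) fun h ↦ ?_
  simpa only [add_assoc] using hmin h

/-- If `h*` is a global minimizer of the cubic model
`m(h) = ⟨g,h⟩ + ½⟨Qh,h⟩ + (M/6)‖h‖³`, then `⟨g, h*⟩ ≤ 0`. -/
theorem cubic_model_global_min_inner_nonpos {n : ℕ} (Q : Matrix (Fin n) (Fin n) ℝ)
    (hQ : Q.IsSymm) (g hs : EuclideanSpace ℝ (Fin n)) (M : ℝ) (hM : 0 < M)
    (hmin : ∀ h : EuclideanSpace ℝ (Fin n),
      ⟪g, hs⟫ + (1 / 2) * ⟪(Matrix.toEuclideanCLM (𝕜 := ℝ) Q) hs, hs⟫ + (M / 6) * ‖hs‖ ^ 3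
        ≤ ⟪g, h⟫ + (1 / 2) * ⟪(Matrix.toEuclideanCLM (𝕜 := ℝ) Q) h, h⟫ + (M / 6) * ‖h‖ ^ 3) :
    ⟪g, hs⟫ ≤ 0 :=
  cubic_model_global_min_inner_nonpos_general Q g hs M hmin
end
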